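/- For all real x > 0, the inequality 1/(2x) - 1/(12x^2) < ψ(x+1) - log(x) < 1/(2x) holds, where ψ is the digamma function. -/

import Mathlib

open Real MeasureTheory Filter

/-- The digamma function: logarithmic derivative of the Gamma function. -/
noncomputable def digamma (x : ℝ) : ℝ := deriv (fun y => Real.log (Real.Gamma y)) x

/-!
Write `f t = ψ(t + 1) - log t`. The recurrence `ψ(t + 1) = ψ(t) + 1/t` gives
`f t - f (t + 1) = log (t + 1) - log t - 1/(t + 1)`, and convexity of `log Γ` squeezes
`log t ≤ ψ(t + 1) ≤ log (t + 1)`, so `f → 0` at infinity. Hence `f < g` for any `g → 0`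
whose steps `g t - g (t + 1)` strictly dominate those of `f`, and symmetrically.
For `g = 1/(2t)` and `g = 1/(2t) - 1/(12t²)` this reduces to the trapezoid bound for
`log (t + 1) - log t = ∫ₜ^{t+1} ds/s` and its Euler–Maclaurin correction; each is proved by
showing that the error is strictly decreasing in `t` and tends to `0`.
-/

open Topology Set

theorem pos_of_apply_add_one_lt_of_tendsto_atTop_zero {D : ℝ → ℝ} {x : ℝ}
    (hstep : ∀ t ≥ x, D (t + 1) < D t) (hlim : Tendsto D atTop (𝓝 0)) : 0 < D x := by
  have hanti : StrictAnti fun n : ℕ => D (x + n) := strictAnti_nat_of_succ_lt fun n => by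
    simpa [add_assoc] using hstep (x + n) (by simp)
  have hseq : Tendsto (fun n : ℕ => D (x + n)) atTop (𝓝 0) :=
    hlim.comp (tendsto_atTop_add_const_left _ x tendsto_natCast_atTop_atTop)
  calc 0 ≤ D (x + (1 : ℕ)) := hanti.antitone.le_of_tendsto hseq 1
    _ < D (x + (0 : ℕ)) := hanti zero_lt_one
    _ = D x := by simp

theorem pos_of_hasDerivAt_neg_of_tendsto_atTop_zero {D D' : ℝ → ℝ} {a x : ℝ}
    (hD : ∀ t > a, HasDerivAt D (D' t) t) (hD' : ∀ t > a, D' t < 0)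
    (hlim : Tendsto D atTop (𝓝 0)) (hx : a < x) : 0 < D x := by
  have hanti : StrictAntiOn D (Ioi a) := by
    refine strictAntiOn_of_hasDerivWithinAt_neg (f' := D') (convex_Ioi a)
      (fun t ht => (hD t ht).continuousAt.continuousWithinAt) (fun t ht => ?_) (fun t ht => ?_)
    all_goals rw [interior_Ioi] at ht
    exacts [(hD t ht).hasDerivWithinAt, hD' t ht]
  refine pos_of_apply_add_one_lt_of_tendsto_atTop_zero (fun t ht => ?_) hlim
  exact hanti (mem_Ioi.2 (by linarith)) (mem_Ioi.2 (by linarith)) (lt_add_one t)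

theorem lt_of_sub_add_one_lt_of_tendsto_atTop_zero {f g : ℝ → ℝ} {x : ℝ}
    (hstep : ∀ t ≥ x, f t - f (t + 1) < g t - g (t + 1))
    (hf : Tendsto f atTop (𝓝 0)) (hg : Tendsto g atTop (𝓝 0)) : f x < g x := by
  have := pos_of_apply_add_one_lt_of_tendsto_atTop_zero (D := fun t => g t - f t)
    (fun t ht => by linarith [hstep t ht]) (by simpa using hg.sub hf)
  linarith

theorem tendsto_one_div_mul_add_pow_atTop (c b : ℝ) {n : ℕ} (hc : 0 < c) (hn : n ≠ 0) :
    Tendsto (fun s : ℝ => 1 / (c * (s + b) ^ n)) atTop (𝓝 0) :=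
  tendsto_const_nhds.div_atTop <| ((tendsto_pow_atTop hn).comp
    (tendsto_atTop_add_const_right _ b tendsto_id)).const_mul_atTop hc

theorem log_add_one_sub_log_lt {t : ℝ} (ht : 0 < t) :
    log (t + 1) - log t < 1 / (2 * t) + 1 / (2 * (t + 1)) := by
  suffices 0 < 1 / (2 * t) + 1 / (2 * (t + 1)) - (log (t + 1) - log t) by linarith
  refine pos_of_hasDerivAt_neg_of_tendsto_atTop_zero
    (D := fun s => 1 / (2 * s) + 1 / (2 * (s + 1)) - (log (s + 1) - log s))
    (D' := fun s => -(1 / (2 * s ^ 2 * (s + 1) ^ 2)))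
    (fun s hs => ?_) (fun s hs => neg_lt_zero.2 (by positivity)) ?_ ht
  · have hid := hasDerivAt_id' s
    have h1 : HasDerivAt (fun y : ℝ => y + 1) 1 s := hid.add_const 1
    have hinv {f : ℝ → ℝ} {f' : ℝ} (c : ℝ) (hf : HasDerivAt f f' s)
        (hc : c * f s ≠ 0) :=
      (hasDerivAt_const s (1 : ℝ)).fun_div (hf.const_mul c) hc
    have := ((hinv 2 hid (by positivity)).fun_add (hinv 2 h1 (by positivity))).fun_sub
      ((h1.log (by positivity)).fun_sub (hasDerivAt_log hs.ne'))
    refine this.congr_deriv ?_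
    field_simp
    ring
  · simpa using ((tendsto_one_div_mul_add_pow_atTop 2 0 two_pos one_ne_zero).add
      (tendsto_one_div_mul_add_pow_atTop 2 1 two_pos one_ne_zero)).sub
      (tendsto_log_comp_add_sub_log 1)

theorem lt_log_add_one_sub_log {t : ℝ} (ht : 0 < t) :
    1 / (2 * t) + 1 / (2 * (t + 1)) - (1 / (12 * t ^ 2) - 1 / (12 * (t + 1) ^ 2)) <
      log (t + 1) - log t := by
  suffices 0 < log (t + 1) - log t - (1 / (2 * t) + 1 / (2 * (t + 1))) +
      (1 / (12 * t ^ 2) - 1 / (12 * (t + 1) ^ 2)) by linarith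
  refine pos_of_hasDerivAt_neg_of_tendsto_atTop_zero
    (D := fun s => log (s + 1) - log s - (1 / (2 * s) + 1 / (2 * (s + 1))) +
      (1 / (12 * s ^ 2) - 1 / (12 * (s + 1) ^ 2)))
    (D' := fun s => -(1 / (6 * s ^ 3 * (s + 1) ^ 3)))
    (fun s hs => ?_) (fun s hs => neg_lt_zero.2 (by positivity)) ?_ ht
  · have hid := hasDerivAt_id' s
    have h1 : HasDerivAt (fun y : ℝ => y + 1) 1 s := hid.add_const 1
    have hinv {f : ℝ → ℝ} {f' : ℝ} (c : ℝ) (hf : HasDerivAt f f' s)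
        (hc : c * f s ≠ 0) :=
      (hasDerivAt_const s (1 : ℝ)).fun_div (hf.const_mul c) hc
    have := (((h1.log (by positivity)).fun_sub (hasDerivAt_log hs.ne')).fun_sub
      ((hinv 2 hid (by positivity)).fun_add (hinv 2 h1 (by positivity)))).fun_add
      ((hinv 12 (hid.fun_pow 2) (by positivity)).fun_sub
        (hinv 12 (h1.fun_pow 2) (by positivity)))
    refine this.congr_deriv ?_
    field_simp
    ring
  · simpa using ((tendsto_log_comp_add_sub_log 1).sub
      ((tendsto_one_div_mul_add_pow_atTop 2 0 two_pos one_ne_zero).add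
      (tendsto_one_div_mul_add_pow_atTop 2 1 two_pos one_ne_zero))).add
      ((tendsto_one_div_mul_add_pow_atTop 12 0 (by norm_num) two_ne_zero).sub
      (tendsto_one_div_mul_add_pow_atTop 12 1 (by norm_num) two_ne_zero))

theorem differentiableAt_log_Gamma {y : ℝ} (hy : 0 < y) :
    DifferentiableAt ℝ (fun z => log (Gamma z)) y :=
  (Real.differentiableAt_Gamma fun m hm => by linarith [m.cast_nonneg (α := ℝ)]).log
    (Real.Gamma_pos_of_pos hy).ne'

theorem log_Gamma_add_one {y : ℝ} (hy : 0 < y) :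
    log (Gamma (y + 1)) = log (Gamma y) + log y := by
  rw [Real.Gamma_add_one hy.ne', Real.log_mul hy.ne' (Real.Gamma_pos_of_pos hy).ne', add_comm]

theorem digamma_add_one {y : ℝ} (hy : 0 < y) : digamma (y + 1) = digamma y + 1 / y := by
  have hshift : digamma (y + 1) = deriv (fun z => log (Gamma (z + 1))) y :=
    (deriv_comp_add_const (f := fun z => log (Gamma z)) 1 y).symm
  rw [hshift, one_div, ← Real.deriv_log, digamma,
    ← deriv_add (differentiableAt_log_Gamma hy) (Real.differentiableAt_log hy.ne')]
  refine EventuallyEq.deriv_eq ?_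
  filter_upwards [eventually_gt_nhds hy] with z hz using log_Gamma_add_one hz

theorem log_le_digamma_add_one {y : ℝ} (hy : 0 < y) : log y ≤ digamma (y + 1) := by
  have := Real.convexOn_log_Gamma.slope_le_deriv (mem_Ioi.2 hy) (mem_Ioi.2 (by linarith))
    (lt_add_one y) (differentiableAt_log_Gamma (by linarith))
  simp only [slope_def_field, add_sub_cancel_left, div_one, Function.comp_apply] at this
  rwa [log_Gamma_add_one hy, add_sub_cancel_left] at this

theorem digamma_add_one_le_log_add_one {y : ℝ} (hy : 0 < y) :
    digamma (y + 1) ≤ log (y + 1) := by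
  have := Real.convexOn_log_Gamma.deriv_le_slope (mem_Ioi.2 (by linarith : 0 < y + 1))
    (mem_Ioi.2 (by linarith : 0 < y + 1 + 1)) (lt_add_one _)
    (differentiableAt_log_Gamma (by linarith))
  simp only [slope_def_field, add_sub_cancel_left, div_one, Function.comp_apply] at this
  rwa [log_Gamma_add_one (by linarith), add_sub_cancel_left] at this

theorem tendsto_digamma_add_one_sub_log :
    Tendsto (fun y => digamma (y + 1) - log y) atTop (𝓝 0) := by
  refine tendsto_of_tendsto_of_tendsto_of_le_of_le' tendsto_const_nhds
    (Real.tendsto_log_comp_add_sub_log 1) ?_ ?_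
  all_goals filter_upwards [eventually_gt_atTop 0] with y hy
  · linarith [log_le_digamma_add_one hy]
  · linarith [digamma_add_one_le_log_add_one hy]

theorem digamma_log_bounds (x : ℝ) (hx : 0 < x) :
    1 / (2 * x) - 1 / (12 * x ^ 2) < digamma (x + 1) - Real.log x ∧
      digamma (x + 1) - Real.log x < 1 / (2 * x) := by
  have hdiff : ∀ t ≥ x, (digamma (t + 1) - log t) - (digamma (t + 1 + 1) - log (t + 1)) =
      log (t + 1) - log t - 2 * (1 / (2 * (t + 1))) := fun t ht => by
    rw [digamma_add_one (y := t + 1) (by linarith)]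
    field_simp
    ring
  have h2 : Tendsto (fun t : ℝ => 1 / (2 * t)) atTop (𝓝 0) := by
    simpa using tendsto_one_div_mul_add_pow_atTop 2 0 two_pos one_ne_zero
  have hL : Tendsto (fun t : ℝ => 1 / (2 * t) - 1 / (12 * t ^ 2)) atTop (𝓝 0) := by
    simpa using h2.sub (tendsto_one_div_mul_add_pow_atTop 12 0 (by norm_num) two_ne_zero)
  constructor
  · refine lt_of_sub_add_one_lt_of_tendsto_atTop_zero (fun t ht => ?_) hL
      tendsto_digamma_add_one_sub_log
    linarith [hdiff t ht, lt_log_add_one_sub_log (hx.trans_le ht)]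
  · refine lt_of_sub_add_one_lt_of_tendsto_atTop_zero (fun t ht => ?_)
      tendsto_digamma_add_one_sub_log h2
    linarith [hdiff t ht, log_add_one_sub_log_lt (hx.trans_le ht)]
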